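/- Let Ω be a d×d Hermitian complex matrix with 0 ≤ Ω ≤ I (i.e. both Ω and I − Ω are positive semidefinite), and let ψ ∈ ℂ^d be a unit vector with Ωψ = ψ. Then for every density matrix ρ on ℂ^d satisfying ⟨ψ, ρψ⟩ ≤ 1 − ε, where 0 ≤ ε ≤ 1, one has Tr(Ωρ) ≤ 1 − ν(Ω)·ε. -/

import Mathlib

open Matrix
open scoped ComplexOrder

/-- The second eigenvalue `λ₂(Ω)` of a strategy operator `Ω` relative to the target
state `ψ`: the supremum of `⟨φ, Ω φ⟩` over unit vectors `φ` orthogonal to `ψ`. -/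
noncomputable def secondEigenvalue (d : ℕ) (Ω : Matrix (Fin d) (Fin d) ℂ)
    (ψ : Fin d → ℂ) : ℝ :=
  sSup {x : ℝ | ∃ φ : Fin d → ℂ,
    star φ ⬝ᵥ φ = 1 ∧ star φ ⬝ᵥ ψ = 0 ∧ (star φ ⬝ᵥ (Ω *ᵥ φ)).re = x}

/-- The spectral gap `ν(Ω) = 1 - λ₂(Ω)`. -/
noncomputable def spectralGap (d : ℕ) (Ω : Matrix (Fin d) (Fin d) ℂ)
    (ψ : Fin d → ℂ) : ℝ :=
  1 - secondEigenvalue d Ω ψ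

/-!
Write `P = ψψ*` and `λ₂ = secondEigenvalue d Ω ψ`. Splitting a vector as `u = w + cψ` with
`w ⊥ ψ`, the Hermitian matrix `Ω` fixing `ψ` has no cross terms, so
`⟨u, Ωu⟩ = ⟨w, Ωw⟩ + |c|² ≤ λ₂‖w‖² + |c|² = ⟨u, (λ₂ • 1 + (1 - λ₂) • P) u⟩`.
Since `ρ` is a sum of rank-one matrices `vv*`, pairing this with `ρ` gives
`Tr(Ωρ) ≤ λ₂ + (1 - λ₂) f` with `f = ⟨ψ, ρψ⟩`, which is `1 - ν (1 - f) ≤ 1 - ν ε`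
because `ν ≥ 0` (from `Ω ≤ 1`) and `1 - f ≥ ε`.
-/

namespace Matrix

lemma trace_mul_vecMulVec {R n : Type*} [CommSemiring R] [Fintype n] (A : Matrix n n R)
    (a b : n → R) : (A * vecMulVec a b).trace = b ⬝ᵥ (A *ᵥ a) := by
  rw [mul_vecMulVec, trace_vecMulVec, dotProduct_comm]

lemma re_trace_mul_le_of_re_dotProduct_mulVec_le {𝕜 n : Type*} [RCLike 𝕜] [Fintype n]
    {A B ρ : Matrix n n 𝕜} (hρ : ρ.PosSemidef)
    (hAB : ∀ x, RCLike.re (star x ⬝ᵥ (A *ᵥ x)) ≤ RCLike.re (star x ⬝ᵥ (B *ᵥ x))) :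
    RCLike.re (A * ρ).trace ≤ RCLike.re (B * ρ).trace := by
  obtain ⟨m, v, rfl⟩ := posSemidef_iff_eq_sum_vecMulVec.mp hρ
  simp only [Matrix.mul_sum, trace_sum, trace_mul_vecMulVec, map_sum]
  exact Finset.sum_le_sum fun i _ => hAB (v i)

lemma dotProduct_mulVec_add_smul_of_mulVec_eq_self {R n : Type*} [CommRing R] [StarRing R]
    [Fintype n] {A : Matrix n n R} (hA : A.IsHermitian) {ψ w : n → R} (hAψ : A *ᵥ ψ = ψ)
    (hw : star ψ ⬝ᵥ w = 0) (c : R) :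
    star (w + c • ψ) ⬝ᵥ (A *ᵥ (w + c • ψ)) =
      star w ⬝ᵥ (A *ᵥ w) + star c * c * (star ψ ⬝ᵥ ψ) := by
  have hwψ : star w ⬝ᵥ ψ = 0 := by rw [star_dotProduct, hw, star_zero]
  have hψAw : star ψ ⬝ᵥ (A *ᵥ w) = 0 := by
    rw [dotProduct_mulVec, ← hA.eq, ← star_mulVec, hAψ, hw]
  simp only [star_add, star_smul, mulVec_add, mulVec_smul, hAψ, add_dotProduct, dotProduct_add,
    smul_dotProduct, dotProduct_smul, hwψ, hψAw, smul_eq_mul]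
  ring

end Matrix

section SecondEigenvalue

variable {d : ℕ} {Ω : Matrix (Fin d) (Fin d) ℂ} {ψ : Fin d → ℂ}

lemma re_dotProduct_mulVec_le_re_dotProduct_self (hΩle : (1 - Ω).PosSemidef) (φ : Fin d → ℂ) :
    (star φ ⬝ᵥ (Ω *ᵥ φ)).re ≤ (star φ ⬝ᵥ φ).re := by
  have h := hΩle.re_dotProduct_nonneg φ
  rw [sub_mulVec, one_mulVec, dotProduct_sub] at h
  simpa [sub_nonneg] using h

lemma secondEigenvalue_le_one (hΩle : (1 - Ω).PosSemidef) : secondEigenvalue d Ω ψ ≤ 1 :=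
  Real.sSup_le (fun _ ⟨φ, hφ, _, hx⟩ => by
    simpa [hx, hφ] using re_dotProduct_mulVec_le_re_dotProduct_self hΩle φ) zero_le_one

lemma le_secondEigenvalue (hΩle : (1 - Ω).PosSemidef) {φ : Fin d → ℂ} (hφ : star φ ⬝ᵥ φ = 1)
    (hφψ : star φ ⬝ᵥ ψ = 0) : (star φ ⬝ᵥ (Ω *ᵥ φ)).re ≤ secondEigenvalue d Ω ψ :=
  le_csSup ⟨1, fun _ ⟨φ, hφ, _, hx⟩ => by
      simpa [hx, hφ] using re_dotProduct_mulVec_le_re_dotProduct_self hΩle φ⟩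
    ⟨φ, hφ, hφψ, rfl⟩

lemma re_dotProduct_mulVec_le_secondEigenvalue_mul (hΩle : (1 - Ω).PosSemidef)
    {w : Fin d → ℂ} (hw : star w ⬝ᵥ ψ = 0) :
    (star w ⬝ᵥ (Ω *ᵥ w)).re ≤ secondEigenvalue d Ω ψ * (star w ⬝ᵥ w).re := by
  rcases eq_or_ne w 0 with rfl | hw0
  · simp
  have hpos : 0 < star w ⬝ᵥ w := dotProduct_star_self_pos_iff.mpr hw0
  set t := (star w ⬝ᵥ w).re
  have ht : 0 < t := (Complex.lt_def.mp hpos).1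
  have hwt : star w ⬝ᵥ w = t := Complex.eq_re_of_ofReal_le (r := 0) (by simp [hpos.le])
  have hscale : ∀ v : Fin d → ℂ, star ((√t)⁻¹ • w) ⬝ᵥ v = (√t)⁻¹ • (star w ⬝ᵥ v) := by
    intro v
    rw [star_smul, star_trivial, smul_dotProduct]
  have hsqrt : (√t)⁻¹ * (√t)⁻¹ = t⁻¹ := by rw [← mul_inv, Real.mul_self_sqrt ht.le]
  have hle := le_secondEigenvalue hΩle (ψ := ψ) (φ := (√t)⁻¹ • w) ?unit ?orth
  case unit =>
    rw [hscale, dotProduct_smul, hwt, smul_smul, hsqrt, Complex.real_smul, Complex.ofReal_inv,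
      inv_mul_cancel₀ (by exact_mod_cast ht.ne')]
  case orth => rw [hscale, hw, smul_zero]
  rw [hscale, mulVec_smul, dotProduct_smul, smul_smul, hsqrt, Complex.smul_re] at hle
  rw [mul_comm]
  exact (inv_mul_le_iff₀ ht).mp hle

lemma re_dotProduct_mulVec_le_secondEigenvalue_smul_one_add_vecMulVec (hΩherm : Ω.IsHermitian)
    (hΩle : (1 - Ω).PosSemidef) (hψ : star ψ ⬝ᵥ ψ = 1) (hΩψ : Ω *ᵥ ψ = ψ) (u : Fin d → ℂ) :
    (star u ⬝ᵥ (Ω *ᵥ u)).re ≤ (star u ⬝ᵥ (((secondEigenvalue d Ω ψ : ℂ) • 1 +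
      ((1 - secondEigenvalue d Ω ψ : ℝ) : ℂ) • vecMulVec ψ (star ψ)) *ᵥ u)).re := by
  set c := star ψ ⬝ᵥ u with hcdef
  set w := u - c • ψ
  have hw : star ψ ⬝ᵥ w = 0 := by
    rw [dotProduct_sub, dotProduct_smul, hψ, smul_eq_mul, mul_one, sub_self]
  have hu : u = w + c • ψ := (sub_add_cancel _ _).symm
  have hΩu := dotProduct_mulVec_add_smul_of_mulVec_eq_self hΩherm hΩψ hw c
  have hnorm := dotProduct_mulVec_add_smul_of_mulVec_eq_self isHermitian_one (one_mulVec ψ) hw c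
  rw [← hu] at hΩu hnorm
  simp only [one_mulVec, hψ, mul_one] at hnorm
  have horth := re_dotProduct_mulVec_le_secondEigenvalue_mul hΩle (w := w)
    (by rw [star_dotProduct, hw, star_zero])
  have huψ : star u ⬝ᵥ ψ = star c := star_dotProduct _ _
  have hc : star c * c = (Complex.normSq c : ℂ) := by
    rw [Complex.normSq_eq_conj_mul_self, Complex.star_def]
  simp only [add_mulVec, smul_mulVec, one_mulVec, vecMulVec_mulVec, dotProduct_add,
    dotProduct_smul, huψ, hΩu, hnorm, hψ, mul_one, op_smul_eq_mul, smul_eq_mul, ← hcdef, hc]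
  simp only [Complex.add_re, Complex.re_ofReal_mul, Complex.ofReal_re]
  linarith

end SecondEigenvalue

theorem passing_probability_le_general (d : ℕ) (Ω : Matrix (Fin d) (Fin d) ℂ)
    (hΩherm : Ω.IsHermitian)
    (hΩle : ((1 : Matrix (Fin d) (Fin d) ℂ) - Ω).PosSemidef)
    (ψ : Fin d → ℂ) (hψ : star ψ ⬝ᵥ ψ = 1) (hΩψ : Ω *ᵥ ψ = ψ)
    (ε : ℝ)
    (ρ : Matrix (Fin d) (Fin d) ℂ) (hρpos : ρ.PosSemidef) (hρtr : ρ.trace = 1)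
    (hfid : (star ψ ⬝ᵥ (ρ *ᵥ ψ)).re ≤ 1 - ε) :
    (Ω * ρ).trace.re ≤ 1 - spectralGap d Ω ψ * ε := by
  set l := secondEigenvalue d Ω ψ
  have hl : l ≤ 1 := secondEigenvalue_le_one hΩle
  calc (Ω * ρ).trace.re
      ≤ (((l : ℂ) • 1 + ((1 - l : ℝ) : ℂ) • vecMulVec ψ (star ψ)) * ρ).trace.re :=
        re_trace_mul_le_of_re_dotProduct_mulVec_le hρpos
          (re_dotProduct_mulVec_le_secondEigenvalue_smul_one_add_vecMulVec hΩherm hΩle hψ hΩψ)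
    _ = l + (1 - l) * (star ψ ⬝ᵥ (ρ *ᵥ ψ)).re := by
        rw [add_mul, smul_mul, smul_mul, one_mul, trace_add, trace_smul, trace_smul, hρtr,
          trace_mul_comm, trace_mul_vecMulVec]
        simp
    _ ≤ 1 - spectralGap d Ω ψ * ε := by
        rw [spectralGap]
        linarith [mul_le_mul_of_nonneg_left hfid (sub_nonneg.mpr hl)]

/-- If `0 ≤ Ω ≤ I`, `Ω ψ = ψ` for a unit vector `ψ`, and `ρ` is a density matrix with
fidelity `⟨ψ, ρ ψ⟩ ≤ 1 - ε`, then `Tr(Ω ρ) ≤ 1 - ν(Ω) ε`. -/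
theorem passing_probability_le (d : ℕ) (Ω : Matrix (Fin d) (Fin d) ℂ)
    (hΩherm : Ω.IsHermitian) (hΩpos : Ω.PosSemidef)
    (hΩle : ((1 : Matrix (Fin d) (Fin d) ℂ) - Ω).PosSemidef)
    (ψ : Fin d → ℂ) (hψ : star ψ ⬝ᵥ ψ = 1) (hΩψ : Ω *ᵥ ψ = ψ)
    (ε : ℝ) (hε0 : 0 ≤ ε) (hε1 : ε ≤ 1)
    (ρ : Matrix (Fin d) (Fin d) ℂ) (hρpos : ρ.PosSemidef) (hρtr : ρ.trace = 1)
    (hfid : (star ψ ⬝ᵥ (ρ *ᵥ ψ)).re ≤ 1 - ε) :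
    (Ω * ρ).trace.re ≤ 1 - spectralGap d Ω ψ * ε :=
  passing_probability_le_general d Ω hΩherm hΩle ψ hψ hΩψ ε ρ hρpos hρtr hfid
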